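/- Let M be a positive integer and h > 0. Let w, u be grid functions on {0,…,M} with w₀ = w_M = u₀ = u_M = 0, and let R be any grid function on {0,…,M}, such that wᵢ = δₓ²uᵢ − (h²/12)·δₓ²wᵢ + Rᵢ for 1 ≤ i ≤ M−1. Then ⟨w,u⟩ ≤ −|u|₁² − (h²/18)·‖w‖² + (h²/12)·⟨R,w⟩ + ⟨R,u⟩. -/
import Mathlib


/-- The second difference quotient `δₓ²vᵢ = (v_{i+1} - 2vᵢ + v_{i-1})/h²`. -/
noncomputable def dx2 (h : ℝ) (v : ℕ → ℝ) (i : ℕ) : ℝ :=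
  (v (i + 1) - 2 * v i + v (i - 1)) / h ^ 2

/-- The discrete inner product `⟨u,v⟩ = h ∑_{i=1}^{M-1} uᵢ vᵢ`. -/
noncomputable def inn (M : ℕ) (h : ℝ) (u v : ℕ → ℝ) : ℝ :=
  h * ∑ i ∈ Finset.Icc 1 (M - 1), u i * v i

/-- The squared discrete `H¹`-seminorm `|v|₁² = h ∑_{i=1}^{M} ((vᵢ - v_{i-1})/h)²`. -/
noncomputable def sem1sq (M : ℕ) (h : ℝ) (v : ℕ → ℝ) : ℝ :=
  h * ∑ i ∈ Finset.Icc 1 M, ((v i - v (i - 1)) / h) ^ 2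

/-- The squared discrete `L²`-norm `‖v‖² = h ∑_{i=1}^{M-1} vᵢ²`. -/
noncomputable def normsq (M : ℕ) (h : ℝ) (v : ℕ → ℝ) : ℝ :=
  h * ∑ i ∈ Finset.Icc 1 (M - 1), (v i) ^ 2

lemma key (N : ℕ) (v u : ℕ → ℝ) :
    ∑ i ∈ Finset.Icc 1 N, (v (i+1) - 2*v i + v (i-1)) * u i
      = -∑ i ∈ Finset.Icc 1 (N+1), (v i - v (i-1)) * (u i - u (i-1))
        - (v 1 - v 0) * u 0 + (v (N+1) - v N) * u (N+1) := by
  induction N with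
  | zero => simp; ring
  | succ n ih =>
    rw [Finset.sum_Icc_succ_top (by omega : 1 ≤ n+1),
        Finset.sum_Icc_succ_top (by omega : 1 ≤ n+1+1), ih]
    simp only [Nat.add_sub_cancel]
    ring

lemma sbp (M : ℕ) (hM : 0 < M) (h : ℝ) (v u : ℕ → ℝ)
    (hu0 : u 0 = 0) (huM : u M = 0) :
    ∑ i ∈ Finset.Icc 1 (M-1), dx2 h v i * u i
      = -(∑ i ∈ Finset.Icc 1 M, (v i - v (i-1)) * (u i - u (i-1))) / h^2 := by
  have hM1 : M - 1 + 1 = M := by omega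
  have hk := key (M-1) v u
  rw [hM1] at hk
  have : ∑ i ∈ Finset.Icc 1 (M-1), dx2 h v i * u i
      = (∑ i ∈ Finset.Icc 1 (M-1), (v (i+1) - 2*v i + v (i-1)) * u i) / h^2 := by
    rw [Finset.sum_div]
    exact Finset.sum_congr rfl fun i _ => by unfold dx2; ring
  rw [this, hk, hu0, huM]
  ring

lemma shift (N : ℕ) (f : ℕ → ℝ) :
    ∑ i ∈ Finset.Icc 1 (N+1), f (i-1) = ∑ i ∈ Finset.Icc 0 N, f i := by
  rw [show Finset.Icc 1 (N+1) = (Finset.Icc 0 N).map (addRightEmbedding 1) by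
        rw [Finset.map_add_right_Icc], Finset.sum_map]
  simp [addRightEmbedding]

lemma inv_ineq (M : ℕ) (hM : 0 < M) (w : ℕ → ℝ) (hw0 : w 0 = 0) (hwM : w M = 0) :
    ∑ i ∈ Finset.Icc 1 M, (w i - w (i-1)) * (w i - w (i-1))
      ≤ 4 * ∑ i ∈ Finset.Icc 1 (M-1), (w i)^2 := by
  have h1 : ∑ i ∈ Finset.Icc 1 M, (w i - w (i-1)) * (w i - w (i-1))
      ≤ ∑ i ∈ Finset.Icc 1 M, (2*(w i)^2 + 2*(w (i-1))^2) :=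
    Finset.sum_le_sum fun i _ => by nlinarith [sq_nonneg (w i + w (i-1))]
  rw [Finset.sum_add_distrib] at h1
  have h2 : ∑ i ∈ Finset.Icc 1 M, 2*(w i)^2 = 2 * ∑ i ∈ Finset.Icc 1 (M-1), (w i)^2 := by
    rw [← Finset.mul_sum]
    congr 1
    conv_lhs => rw [show M = M-1+1 from by omega]
    rw [Finset.sum_Icc_succ_top (by omega), show M-1+1 = M from by omega, hwM]
    simp
  have h3 : ∑ i ∈ Finset.Icc 1 M, 2*(w (i-1))^2 = 2 * ∑ i ∈ Finset.Icc 1 (M-1), (w i)^2 := by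
    rw [← Finset.mul_sum]
    congr 1
    conv_lhs => rw [show M = M-1+1 from by omega]
    rw [shift (M-1) (fun j => (w j)^2),
        show Finset.Icc 0 (M-1) = insert 0 (Finset.Icc 1 (M-1)) by ext x; simp; omega,
        Finset.sum_insert (by simp), hw0]
    simp
  rw [h2, h3] at h1
  linarith

/-- If `wᵢ = δₓ²uᵢ - (h²/12)δₓ²wᵢ + Rᵢ` for `1 ≤ i ≤ M-1` and `u, w` vanish at the
endpoints, then
`⟨w,u⟩ ≤ -|u|₁² - (h²/18)‖w‖² + (h²/12)⟨R,w⟩ + ⟨R,u⟩`. -/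
theorem stmt_8 (M : ℕ) (hM : 0 < M) (h : ℝ) (hh : 0 < h)
    (w u R : ℕ → ℝ) (hw0 : w 0 = 0) (hwM : w M = 0) (hu0 : u 0 = 0) (huM : u M = 0)
    (hrel : ∀ i, 1 ≤ i → i ≤ M - 1 → w i = dx2 h u i - h ^ 2 / 12 * dx2 h w i + R i) :
    inn M h w u ≤ -sem1sq M h u - h ^ 2 / 18 * normsq M h w
      + h ^ 2 / 12 * inn M h R w + inn M h R u := by
  have hne : h ≠ 0 := ne_of_gt hh
  set Duu := ∑ i ∈ Finset.Icc 1 M, (u i - u (i-1)) * (u i - u (i-1)) with hDuu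
  set Dww := ∑ i ∈ Finset.Icc 1 M, (w i - w (i-1)) * (w i - w (i-1)) with hDww
  set Dwu := ∑ i ∈ Finset.Icc 1 M, (w i - w (i-1)) * (u i - u (i-1)) with hDwu
  set Q := ∑ i ∈ Finset.Icc 1 (M-1), (w i)^2 with hQ
  set SRu := ∑ i ∈ Finset.Icc 1 (M-1), R i * u i with hSRu
  set SRw := ∑ i ∈ Finset.Icc 1 (M-1), R i * w i with hSRw
  have s1 : ∑ i ∈ Finset.Icc 1 (M-1), dx2 h u i * u i = -Duu / h^2 :=
    sbp M hM h u u hu0 huM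
  have s2 : ∑ i ∈ Finset.Icc 1 (M-1), dx2 h w i * u i = -Dwu / h^2 :=
    sbp M hM h w u hu0 huM
  have s3 : ∑ i ∈ Finset.Icc 1 (M-1), dx2 h w i * w i = -Dww / h^2 :=
    sbp M hM h w w hw0 hwM
  have s4 : ∑ i ∈ Finset.Icc 1 (M-1), dx2 h u i * w i = -Dwu / h^2 := by
    rw [sbp M hM h u w hw0 hwM, hDwu]
    congr 1
    · congr 1
      exact Finset.sum_congr rfl fun i _ => by ring
  -- expand the relation against u and against w
  have expand : ∀ z : ℕ → ℝ, ∑ i ∈ Finset.Icc 1 (M-1), w i * z i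
      = ∑ i ∈ Finset.Icc 1 (M-1), dx2 h u i * z i
        - h^2/12 * ∑ i ∈ Finset.Icc 1 (M-1), dx2 h w i * z i
        + ∑ i ∈ Finset.Icc 1 (M-1), R i * z i := by
    intro z
    rw [Finset.mul_sum, ← Finset.sum_sub_distrib, ← Finset.sum_add_distrib]
    apply Finset.sum_congr rfl
    intro i hi
    simp only [Finset.mem_Icc] at hi
    rw [hrel i hi.1 hi.2]
    ring
  have eq1 : ∑ i ∈ Finset.Icc 1 (M-1), w i * u i = -Duu/h^2 + Dwu/12 + SRu := by
    rw [expand u, s1, s2]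
    field_simp
    ring
  have eq2 : Q = -Dwu/h^2 + Dww/12 + SRw := by
    have := expand w
    rw [s4, s3] at this
    have hQ' : ∑ i ∈ Finset.Icc 1 (M-1), w i * w i = Q :=
      Finset.sum_congr rfl fun i _ => by ring
    rw [hQ'] at this
    rw [this]
    field_simp
    ring
  have hinv : Dww ≤ 4 * Q := inv_ineq M hM w hw0 hwM
  have hsem : sem1sq M h u = Duu / h := by
    unfold sem1sq
    rw [show ∑ i ∈ Finset.Icc 1 M, ((u i - u (i-1))/h)^2
        = Duu / h^2 by
      rw [hDuu, Finset.sum_div]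
      exact Finset.sum_congr rfl fun i _ => by field_simp]
    field_simp
  have hDwu_eq : Dwu = h^2*Dww/12 + h^2*SRw - h^2*Q := by
    have h2 := eq2
    field_simp at h2
    nlinarith [h2, sq_nonneg h]
  unfold inn normsq
  rw [hsem, ← hQ, ← hSRw, ← hSRu,
    show ∑ i ∈ Finset.Icc 1 (M-1), w i * u i = -Duu/h^2 + Dwu/12 + SRu from eq1, hDwu_eq]
  have hh3 : (0:ℝ) < h^3 := by positivity
  have hmul : h^3 * Dww ≤ h^3 * (4*Q) := mul_le_mul_of_nonneg_left hinv hh3.le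
  have keyeq : h * (-Duu/h^2 + (h^2*Dww/12 + h^2*SRw - h^2*Q)/12 + SRu)
      - (-(Duu/h) - h^2/18*(h*Q) + h^2/12*(h*SRw) + h*SRu)
      = h^3*Dww/144 - h^3*Q/36 := by
    field_simp
    ring
  linarith [keyeq, hmul]
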